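/- Refined exterior lattice resolvent sum bound (Section 6): For every δ ∈ (0, 1/8] there exists a constant C > 0 such that for every k_F ∈ (0,1] there is L₀ > 0 with: for all L ≥ L₀, (1/L³) ∑_{k ∈ Λ*_L, k_F + k_F^{3/2} ≤ |k| ≤ 3 k_F} 1/(|k|² − k_F²) ≤ C k_F^{1/2 + 3δ}. (With ρ := k_F³ this is the bound C ρ^{1/6 + δ} used in the paper.) -/

import Mathlib

/-!
Split the shell `k_F + k_F^{3/2} ≤ |k| ≤ 3 k_F` at the radii `k_F + k_F^{11/8}`,
`k_F + k_F^{5/4}` and `k_F + k_F^{9/8}`. On a shell `k_F + a ≤ |k| ≤ k_F + b` the summand is at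
most `1 / (2 k_F a)`. The half-open cubes of side `2π/L` attached to its lattice points are
disjoint and lie in the spherical shell with radii `k_F + a ∓ √3 · 2π/L`, so once `√3 · 2π/L ≤ a`
the shell holds `O(L³ k_F² b)` lattice points. Each of the four shells therefore contributes
`O(k_F b / a) = O(k_F^{7/8})`, and `k_F^{7/8} ≤ k_F^{1/2 + 3δ}` because `δ ≤ 1/8`.
-/

noncomputable section

open Real

abbrev E3 : Type := EuclideanSpace ℝ (Fin 3)

/-- The momentum lattice point `(2π/L)·n` of `Λ*_L`, for `n ∈ ℤ³`. -/
def momVec (L : ℝ) (n : Fin 3 → ℤ) : E3 :=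
  ∑ j : Fin 3, (2 * π / L * (n j : ℝ)) • EuclideanSpace.single j (1 : ℝ)

/-- The Euclidean norm `|k|` of the lattice point `(2π/L)·n`. -/
def knorm (L : ℝ) (n : Fin 3 → ℤ) : ℝ := ‖momVec L n‖

open MeasureTheory Metric

section LatticeCount

variable {ι : Type*}

def latticePoint (h : ℝ) (n : ι → ℤ) : EuclideanSpace ℝ ι :=
  WithLp.toLp 2 fun j => h * n j

def latticeCell (h : ℝ) (n : ι → ℤ) : Set (EuclideanSpace ℝ ι) :=
  (MeasurableEquiv.toLp 2 (ι → ℝ)).symm ⁻¹' Set.univ.pi fun j => Set.Ico (h * n j) (h * n j + h)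

lemma mem_latticeCell {h : ℝ} {n : ι → ℤ} {x : EuclideanSpace ℝ ι} :
    x ∈ latticeCell h n ↔ ∀ j, h * n j ≤ x j ∧ x j < h * n j + h := by
  simp [latticeCell, MeasurableEquiv.coe_toLp_symm, Set.mem_pi]

lemma measurableSet_latticeCell [Fintype ι] (h : ℝ) (n : ι → ℤ) : MeasurableSet (latticeCell h n) :=
  (MeasurableEquiv.toLp 2 (ι → ℝ)).symm.measurable (.univ_pi fun _ => measurableSet_Ico)

lemma volume_latticeCell [Fintype ι] {h : ℝ} (hh : 0 ≤ h) (n : ι → ℤ) :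
    volume (latticeCell h n) = ENNReal.ofReal (h ^ Fintype.card ι) := by
  rw [latticeCell, (EuclideanSpace.volume_preserving_symm_measurableEquiv_toLp ι).measure_preimage
    (MeasurableSet.univ_pi fun _ => measurableSet_Ico).nullMeasurableSet, volume_pi_pi]
  simp [Real.volume_Ico, ← ENNReal.ofReal_pow hh]

lemma pairwise_disjoint_latticeCell {h : ℝ} (hh : 0 < h) :
    Pairwise (Function.onFun Disjoint (latticeCell h : (ι → ℤ) → Set (EuclideanSpace ℝ ι))) := by
  intro n m hnm
  refine Set.disjoint_left.2 fun x hn hm => hnm (funext fun j => ?_)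
  have floor_eq {k : ι → ℤ} (hk : x ∈ latticeCell h k) : k j = ⌊x j / h⌋ := by
    obtain ⟨hlo, hhi⟩ := mem_latticeCell.1 hk j
    rw [eq_comm, Int.floor_eq_iff, le_div_iff₀ hh, div_lt_iff₀ hh]
    constructor <;> push_cast <;> linarith
  rw [floor_eq hn, floor_eq hm]

lemma dist_latticePoint_le [Fintype ι] {h : ℝ} (hh : 0 ≤ h) {n : ι → ℤ} {x : EuclideanSpace ℝ ι}
    (hx : x ∈ latticeCell h n) : dist x (latticePoint h n) ≤ √(Fintype.card ι) * h := by
  have coord_le (j : ι) : dist (x j) (latticePoint h n j) ^ 2 ≤ h ^ 2 := by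
    obtain ⟨hlo, hhi⟩ := mem_latticeCell.1 hx j
    rw [Real.dist_eq, sq_abs]
    simp only [latticePoint]
    nlinarith
  calc dist x (latticePoint h n) ≤ √(∑ _j : ι, h ^ 2) := by
        rw [EuclideanSpace.dist_eq]
        exact Real.sqrt_le_sqrt (Finset.sum_le_sum fun j _ => coord_le j)
    _ = √(Fintype.card ι) * h := by
        rw [Finset.sum_const, Finset.card_univ, nsmul_eq_mul, Real.sqrt_mul (Nat.cast_nonneg _),
          Real.sqrt_sq hh]

lemma finite_setOf_norm_latticePoint_le [Fintype ι] {h : ℝ} (hh : 0 < h) (R : ℝ) :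
    {n : ι → ℤ | ‖latticePoint h n‖ ≤ R}.Finite := by
  refine (isCompact_closedBall (0 : ι → ℤ) (R / h)).finite_of_discrete.subset fun n hn => ?_
  have hR : 0 ≤ R := (norm_nonneg _).trans hn
  refine mem_closedBall_zero_iff.2 ((pi_norm_le_iff_of_nonneg (by positivity)).2 fun j => ?_)
  have hj : ‖h * (n j : ℝ)‖ ≤ R := (PiLp.norm_apply_le (latticePoint h n) j).trans hn
  rw [norm_mul, Real.norm_of_nonneg hh.le, Int.norm_cast_real] at hj
  rw [le_div_iff₀ hh]
  linarith

lemma volume_ball_add_card_mul_le_volume_closedBall [Fintype ι] {h A B : ℝ} (hh : 0 < h)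
    (hAB : A ≤ B) (S : Finset (ι → ℤ))
    (hS : ∀ n ∈ S, A ≤ ‖latticePoint h n‖ ∧ ‖latticePoint h n‖ ≤ B) :
    volume (ball (0 : EuclideanSpace ℝ ι) (A - √(Fintype.card ι) * h)) +
        S.card * ENNReal.ofReal (h ^ Fintype.card ι) ≤
      volume (closedBall (0 : EuclideanSpace ℝ ι) (B + √(Fintype.card ι) * h)) := by
  set r := √(Fintype.card ι) * h
  have hr : 0 ≤ r := by positivity
  have norm_mem_cell {n : ι → ℤ} {x : EuclideanSpace ℝ ι} (hx : x ∈ latticeCell h n) :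
      ‖latticePoint h n‖ - r ≤ ‖x‖ ∧ ‖x‖ ≤ ‖latticePoint h n‖ + r := by
    have hdist := (abs_norm_sub_norm_le x (latticePoint h n)).trans
      (dist_eq_norm x (latticePoint h n) ▸ dist_latticePoint_le hh.le hx)
    constructor <;> linarith [abs_le.1 hdist]
  have hdisj : Disjoint (ball 0 (A - r)) (⋃ n ∈ S, latticeCell h n) := by
    refine Set.disjoint_left.2 fun x hx hx' => ?_
    obtain ⟨n, hn, hxn⟩ := Set.mem_iUnion₂.1 hx'
    rw [mem_ball_zero_iff] at hx
    linarith [(norm_mem_cell hxn).1, (hS n hn).1]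
  have hsub : ball 0 (A - r) ∪ ⋃ n ∈ S, latticeCell h n ⊆ closedBall 0 (B + r) := by
    refine Set.union_subset (fun x hx => ?_) (Set.iUnion₂_subset fun n hn x hx => ?_)
    · rw [mem_ball_zero_iff] at hx
      rw [mem_closedBall_zero_iff]
      linarith
    · rw [mem_closedBall_zero_iff]
      linarith [(norm_mem_cell hx).2, (hS n hn).2]
  calc volume (ball (0 : EuclideanSpace ℝ ι) (A - r)) + S.card * ENNReal.ofReal (h ^ Fintype.card ι)
      = volume (ball 0 (A - r) ∪ ⋃ n ∈ S, latticeCell h n) := by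
        rw [measure_union hdisj (S.measurableSet_biUnion fun n _ => measurableSet_latticeCell h n),
          measure_biUnion_finset (fun n _ m _ hnm => pairwise_disjoint_latticeCell hh hnm)
            fun n _ => measurableSet_latticeCell h n]
        simp [volume_latticeCell hh.le]
    _ ≤ volume (closedBall 0 (B + r)) := measure_mono hsub

end LatticeCount

lemma momVec_eq_latticePoint (L : ℝ) (n : Fin 3 → ℤ) : momVec L n = latticePoint (2 * π / L) n := by
  ext j
  simp [momVec, latticePoint, WithLp.ofLp_sum, Pi.single_apply]

lemma knorm_eq_norm_latticePoint (L : ℝ) (n : Fin 3 → ℤ) :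
    knorm L n = ‖latticePoint (2 * π / L) n‖ := by
  rw [knorm, momVec_eq_latticePoint]

lemma card_mul_pow_three_le {h A B : ℝ} (hh : 0 < h) (hA : √3 * h ≤ A) (hAB : A ≤ B)
    (S : Finset (Fin 3 → ℤ)) (hS : ∀ n ∈ S, A ≤ ‖latticePoint h n‖ ∧ ‖latticePoint h n‖ ≤ B) :
    S.card * h ^ 3 ≤ 4 * π / 3 * ((B + √3 * h) ^ 3 - (A - √3 * h) ^ 3) := by
  have key := volume_ball_add_card_mul_le_volume_closedBall hh hAB S hS
  simp only [Fintype.card_fin, Nat.cast_ofNat, EuclideanSpace.volume_ball_fin_three,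
    EuclideanSpace.volume_closedBall_fin_three] at key
  have hr : 0 ≤ √3 * h := by positivity
  have hA' : 0 ≤ A - √3 * h := by linarith
  have hB' : 0 ≤ B + √3 * h := by linarith
  have key' : ENNReal.ofReal ((A - √3 * h) ^ 3 * (π * 4 / 3) + S.card * h ^ 3) ≤
      ENNReal.ofReal ((B + √3 * h) ^ 3 * (π * 4 / 3)) := by
    rwa [ENNReal.ofReal_add (by positivity) (by positivity), ENNReal.ofReal_mul (by positivity),
      ENNReal.ofReal_mul (Nat.cast_nonneg _), ENNReal.ofReal_mul (pow_nonneg hB' 3),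
      ENNReal.ofReal_pow hA', ENNReal.ofReal_pow hB', ENNReal.ofReal_natCast]
  rw [ENNReal.ofReal_le_ofReal_iff (by positivity)] at key'
  linarith

section Shell

variable {L kF A B : ℝ}

def shellTerm (L kF A B : ℝ) (n : Fin 3 → ℤ) : ℝ :=
  if A ≤ knorm L n ∧ knorm L n ≤ B then 1 / (knorm L n ^ 2 - kF ^ 2) else 0

def shellSum (L kF A B : ℝ) : ℝ := ∑' n, shellTerm L kF A B n

lemma finite_setOf_knorm_le (hL : 0 < L) (R : ℝ) : {n | knorm L n ≤ R}.Finite := by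
  simpa only [knorm_eq_norm_latticePoint] using
    finite_setOf_norm_latticePoint_le (by positivity : 0 < 2 * π / L) R

lemma summable_shellTerm (hL : 0 < L) (kF A B : ℝ) : Summable (shellTerm L kF A B) :=
  summable_of_hasFiniteSupport <| (finite_setOf_knorm_le hL B).subset fun n hn => by
    by_contra hB
    exact hn (if_neg fun h => hB h.2)

lemma shellTerm_nonneg (hkF : 0 ≤ kF) (hA : kF < A) (n : Fin 3 → ℤ) :
    0 ≤ shellTerm L kF A B n := by
  unfold shellTerm
  split_ifs with h
  · have : kF ^ 2 < knorm L n ^ 2 := by nlinarith [h.1]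
    exact (one_div_pos.2 (sub_pos.2 this)).le
  · exact le_rfl

lemma shellTerm_le_add {C : ℝ} (hkF : 0 ≤ kF) (hA : kF < A) (hAB : A ≤ B) (n : Fin 3 → ℤ) :
    shellTerm L kF A C n ≤ shellTerm L kF A B n + shellTerm L kF B C n := by
  have h₁ := shellTerm_nonneg (L := L) (B := B) hkF hA n
  have h₂ := shellTerm_nonneg (L := L) (B := C) hkF (hA.trans_le hAB) n
  by_cases hAC : A ≤ knorm L n ∧ knorm L n ≤ C
  · rcases le_total (knorm L n) B with hxB | hBx
    · simp only [shellTerm, if_pos hAC, if_pos (And.intro hAC.1 hxB)] at h₂ ⊢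
      linarith
    · simp only [shellTerm, if_pos hAC, if_pos (And.intro hBx hAC.2)] at h₁ ⊢
      linarith
  · rw [shellTerm, if_neg hAC]
    exact add_nonneg h₁ h₂

lemma shellSum_le_add {C : ℝ} (hL : 0 < L) (hkF : 0 ≤ kF) (hA : kF < A) (hAB : A ≤ B) :
    shellSum L kF A C ≤ shellSum L kF A B + shellSum L kF B C := by
  rw [shellSum, shellSum, shellSum,
    ← (summable_shellTerm hL kF A B).tsum_add (summable_shellTerm hL kF B C)]
  exact (summable_shellTerm hL kF A C).tsum_le_tsum (shellTerm_le_add hkF hA hAB)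
    ((summable_shellTerm hL kF A B).add (summable_shellTerm hL kF B C))

lemma one_div_pow_three_mul_shellSum_le {a b : ℝ} (hL : 0 < L) (hkF : 0 < kF)
    (ha : √3 * (2 * π / L) ≤ a) (hab : a ≤ b) (hb : b ≤ 2 * kF) :
    1 / L ^ 3 * shellSum L kF (kF + a) (kF + b) ≤ 2 * kF * b / a := by
  set h := 2 * π / L with hh_def
  set r := √3 * h
  have hh : 0 < h := by positivity
  have hr : 0 < r := mul_pos (by positivity) hh
  have ha0 : 0 < a := hr.trans_le ha
  have hb0 : 0 < b := ha0.trans_le hab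
  have hfin : {n | kF + a ≤ knorm L n ∧ knorm L n ≤ kF + b}.Finite :=
    (finite_setOf_knorm_le hL (kF + b)).subset fun n hn => hn.2
  set S := hfin.toFinset
  have hsum : shellSum L kF (kF + a) (kF + b) = ∑ n ∈ S, shellTerm L kF (kF + a) (kF + b) n :=
    tsum_eq_sum fun n hn => if_neg (by simpa [S] using hn)
  have hterm : ∀ n ∈ S, shellTerm L kF (kF + a) (kF + b) n ≤ 1 / (2 * kF * a) := by
    intro n hn
    have hn' : kF + a ≤ knorm L n ∧ knorm L n ≤ kF + b := by simpa [S] using hn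
    rw [shellTerm, if_pos hn']
    exact one_div_le_one_div_of_le (by positivity) (by nlinarith [hn'.1])
  have hcount : S.card * h ^ 3 ≤ 4 * π / 3 * ((kF + b + r) ^ 3 - (kF + a - r) ^ 3) :=
    card_mul_pow_three_le hh (by linarith) (by linarith) S fun n hn => by
      simpa [S, knorm_eq_norm_latticePoint] using hn
  have hcube : (kF + b + r) ^ 3 - (kF + a - r) ^ 3 ≤ 150 * kF ^ 2 * b := by
    have hwidth : |(kF + b + r) - (kF + a - r)| ≤ 2 * b := abs_le.2 ⟨by linarith, by linarith⟩
    have hradius : max |kF + b + r| |kF + a - r| ≤ 5 * kF :=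
      max_le (abs_le.2 ⟨by linarith, by linarith⟩) (abs_le.2 ⟨by linarith, by linarith⟩)
    calc (kF + b + r) ^ 3 - (kF + a - r) ^ 3
        ≤ |(kF + b + r) ^ 3 - (kF + a - r) ^ 3| := le_abs_self _
      _ ≤ |(kF + b + r) - (kF + a - r)| * 3 * max |kF + b + r| |kF + a - r| ^ 2 :=
          abs_pow_sub_pow_le _ _ 3
      _ ≤ 2 * b * 3 * (5 * kF) ^ 2 := by gcongr
      _ = 150 * kF ^ 2 * b := by ring
  have hcard : S.card / L ^ 3 ≤ 25 * kF ^ 2 * b / π ^ 2 := by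
    have : S.card / L ^ 3 = S.card * h ^ 3 / (8 * π ^ 3) := by
      rw [hh_def]; field_simp; ring
    have hvol : S.card * h ^ 3 ≤ 200 * π * kF ^ 2 * b := by nlinarith [hcount, hcube, Real.pi_pos]
    rw [this, div_le_div_iff₀ (by positivity) (by positivity)]
    nlinarith [mul_le_mul_of_nonneg_right hvol (sq_nonneg π)]
  calc 1 / L ^ 3 * shellSum L kF (kF + a) (kF + b)
      ≤ 1 / L ^ 3 * (S.card * (1 / (2 * kF * a))) := by
        rw [hsum]
        gcongr
        simpa using Finset.sum_le_sum hterm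
    _ = S.card / L ^ 3 / (2 * kF * a) := by ring
    _ ≤ 25 * kF ^ 2 * b / π ^ 2 / (2 * kF * a) := by gcongr
    _ ≤ 2 * kF * b / a := by
        have hpos : 0 < kF ^ 2 * b * a := by positivity
        have hπ : 0 ≤ kF ^ 2 * b * a * (π ^ 2 - 9) :=
          mul_nonneg hpos.le (by nlinarith [Real.pi_gt_three])
        rw [div_div, div_le_div_iff₀ (by positivity) ha0]
        nlinarith [hπ]

lemma one_div_pow_three_mul_shellSum_pow_le {t : ℝ} (ht0 : 0 < t) (ht1 : t ≤ 1)
    (hL : 16 ≤ t ^ 16 * L) :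
    1 / L ^ 3 * shellSum L (t ^ 8) (t ^ 8 + t ^ 12) (3 * t ^ 8) ≤ 10 * t ^ 7 := by
  have hL0 : 0 < L := pos_of_mul_pos_right (by linarith) (by positivity : 0 ≤ t ^ 16)
  have hpow {m k : ℕ} (hmk : m ≤ k) : t ^ k ≤ t ^ m := pow_le_pow_of_le_one ht0.le ht1 hmk
  have hspacing : √3 * (2 * π / L) ≤ t ^ 12 := by
    have hsqrt3 : √3 ≤ 2 := by
      rw [Real.sqrt_le_left (by norm_num)]; norm_num
    have : √3 * (2 * π) ≤ t ^ 16 * L := by nlinarith [Real.pi_le_four, Real.sqrt_nonneg 3]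
    rw [← mul_div_assoc, div_le_iff₀ hL0]
    nlinarith [hpow (show 12 ≤ 16 by norm_num), hL0]
  have hstep {m k : ℕ} (C : ℝ) (hmk : m ≤ k) :
      shellSum L (t ^ 8) (t ^ 8 + t ^ k) C ≤
        shellSum L (t ^ 8) (t ^ 8 + t ^ k) (t ^ 8 + t ^ m) + shellSum L (t ^ 8) (t ^ 8 + t ^ m) C :=
    shellSum_le_add hL0 (by positivity) (by linarith [pow_pos ht0 k]) (by linarith [hpow hmk])
  have hle_two_mul {m : ℕ} (hm : 8 ≤ m) : t ^ m ≤ 2 * t ^ 8 := by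
    linarith [hpow hm, pow_pos ht0 8]
  have hshell {m : ℕ} (b : ℝ) (hm : m ≤ 12) (hb : t ^ m ≤ b) (hb' : b ≤ 2 * t ^ 8) :
      1 / L ^ 3 * shellSum L (t ^ 8) (t ^ 8 + t ^ m) (t ^ 8 + b) ≤ 2 * t ^ 8 * b / t ^ m :=
    one_div_pow_three_mul_shellSum_le hL0 (by positivity) (hspacing.trans (hpow hm)) hb hb'
  rw [show 3 * t ^ 8 = t ^ 8 + 2 * t ^ 8 by ring]
  calc 1 / L ^ 3 * shellSum L (t ^ 8) (t ^ 8 + t ^ 12) (t ^ 8 + 2 * t ^ 8)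
      ≤ 1 / L ^ 3 * (shellSum L (t ^ 8) (t ^ 8 + t ^ 12) (t ^ 8 + t ^ 11) +
          (shellSum L (t ^ 8) (t ^ 8 + t ^ 11) (t ^ 8 + t ^ 10) +
            (shellSum L (t ^ 8) (t ^ 8 + t ^ 10) (t ^ 8 + t ^ 9) +
              shellSum L (t ^ 8) (t ^ 8 + t ^ 9) (t ^ 8 + 2 * t ^ 8)))) := by
        gcongr
        linarith [hstep (t ^ 8 + 2 * t ^ 8) (show 11 ≤ 12 by norm_num),
          hstep (t ^ 8 + 2 * t ^ 8) (show 10 ≤ 11 by norm_num),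
          hstep (t ^ 8 + 2 * t ^ 8) (show 9 ≤ 10 by norm_num)]
    _ = 1 / L ^ 3 * shellSum L (t ^ 8) (t ^ 8 + t ^ 12) (t ^ 8 + t ^ 11) +
        (1 / L ^ 3 * shellSum L (t ^ 8) (t ^ 8 + t ^ 11) (t ^ 8 + t ^ 10) +
          (1 / L ^ 3 * shellSum L (t ^ 8) (t ^ 8 + t ^ 10) (t ^ 8 + t ^ 9) +
            1 / L ^ 3 * shellSum L (t ^ 8) (t ^ 8 + t ^ 9) (t ^ 8 + 2 * t ^ 8))) := by ring
    _ ≤ 2 * t ^ 8 * t ^ 11 / t ^ 12 + (2 * t ^ 8 * t ^ 10 / t ^ 11 +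
          (2 * t ^ 8 * t ^ 9 / t ^ 10 + 2 * t ^ 8 * (2 * t ^ 8) / t ^ 9)) := by
        gcongr
        · exact hshell _ le_rfl (hpow (by norm_num)) (hle_two_mul (by norm_num))
        · exact hshell _ (by norm_num) (hpow (by norm_num)) (hle_two_mul (by norm_num))
        · exact hshell _ (by norm_num) (hpow (by norm_num)) (hle_two_mul (by norm_num))
        · exact hshell _ (by norm_num) (hle_two_mul (by norm_num)) le_rfl
    _ = 10 * t ^ 7 := by field_simp; ring

end Shell

theorem refined_exterior_lattice_resolvent_sum_bound :
    ∀ δ : ℝ, δ ∈ Set.Ioc (0 : ℝ) (1 / 8) →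
      ∃ C : ℝ, 0 < C ∧
        ∀ kF : ℝ, kF ∈ Set.Ioc (0 : ℝ) 1 →
          ∃ L₀ : ℝ, 0 < L₀ ∧ ∀ L : ℝ, L₀ ≤ L →
            (1 / L ^ 3) *
                ∑' n : Fin 3 → ℤ,
                  (if kF + kF ^ ((3 : ℝ) / 2) ≤ knorm L n ∧ knorm L n ≤ 3 * kF then
                    1 / (knorm L n ^ 2 - kF ^ 2)
                  else 0)
              ≤ C * kF ^ ((1 : ℝ) / 2 + 3 * δ) := by
  rintro δ ⟨-, hδ⟩
  refine ⟨10, by norm_num, fun kF ⟨hkF0, hkF1⟩ => ?_⟩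
  obtain ⟨t, ht0, ht1, rfl⟩ : ∃ t : ℝ, 0 < t ∧ t ≤ 1 ∧ kF = t ^ 8 :=
    ⟨kF ^ (1 / 8 : ℝ), by positivity, Real.rpow_le_one hkF0.le hkF1 (by norm_num), by
      rw [← Real.rpow_natCast, ← Real.rpow_mul hkF0.le]; norm_num⟩
  refine ⟨16 / t ^ 16, by positivity, fun L hL => ?_⟩
  have h32 : (t ^ 8) ^ ((3 : ℝ) / 2) = t ^ 12 := by
    rw [← Real.rpow_natCast_mul ht0.le, ← Real.rpow_natCast]; norm_num
  have hexp : t ^ 7 ≤ (t ^ 8) ^ ((1 : ℝ) / 2 + 3 * δ) := by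
    rw [← Real.rpow_natCast_mul ht0.le, ← Real.rpow_natCast]
    exact Real.rpow_le_rpow_of_exponent_ge ht0 ht1 (by push_cast; linarith)
  rw [h32]
  calc _ = 1 / L ^ 3 * shellSum L (t ^ 8) (t ^ 8 + t ^ 12) (3 * t ^ 8) := rfl
    _ ≤ 10 * t ^ 7 := one_div_pow_three_mul_shellSum_pow_le ht0 ht1
        (by rwa [div_le_iff₀ (by positivity), mul_comm] at hL)
    _ ≤ 10 * (t ^ 8) ^ ((1 : ℝ) / 2 + 3 * δ) := by gcongr
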